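/- arXiv:2211.15306 — 3 statements merged into one kernel-verified Lean document; each statement's English description precedes it below -/
import Mathlib

section
/- Let n ≥ 1 and let M : ℝⁿ → vec be an n-parameter persistence module. Then M is finitely presentable if and only if there exists a finite grid 𝒫 ⊆ ℝⁿ such that M ≅ M_𝒫, the restriction-extension of M along 𝒫. -/
/-- A pointwise finite dimensional persistence module over a poset `P`, with coefficients in
the field `k`: a functor from `P` to finite dimensional `k`-vector spaces. -/
structure PersMod (k : Type) [Field k] (P : Type) [PartialOrder P] : Type 1 where
  carrier : P → Type
  [addCommGroup : ∀ x, AddCommGroup (carrier x)]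
  [module : ∀ x, Module k (carrier x)]
  [fd : ∀ x, FiniteDimensional k (carrier x)]
  map : ∀ {x y : P}, x ≤ y → (carrier x →ₗ[k] carrier y)
  map_id : ∀ x : P, map (le_refl x) = LinearMap.id
  map_comp : ∀ {x y z : P} (h₁ : x ≤ y) (h₂ : y ≤ z),
      map (h₁.trans h₂) = (map h₂).comp (map h₁)

attribute [instance] PersMod.addCommGroup PersMod.module PersMod.fd

namespace PersMod

section Core

variable {k : Type} [Field k] {P : Type} [PartialOrder P]

/-- A morphism of persistence modules (a natural transformation). -/
structure Hom (M N : PersMod k P) where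
  app : ∀ x, M.carrier x →ₗ[k] N.carrier x
  natural : ∀ {x y : P} (h : x ≤ y), (app y).comp (M.map h) = (N.map h).comp (app x)

theorem Hom.ext' {M N : PersMod k P} {f g : Hom M N} (h : ∀ x, f.app x = g.app x) :
    f = g := by
  cases f; cases g
  have : _ = _ := funext h
  subst this
  rfl

/-- Two persistence modules are isomorphic. -/
def Isom (M N : PersMod k P) : Prop :=
  ∃ (f : Hom M N) (g : Hom N M),
    (∀ x, (g.app x).comp (f.app x) = LinearMap.id) ∧
    (∀ x, (f.app x).comp (g.app x) = LinearMap.id)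

/-- The zero persistence module(s). -/
def IsZeroMod (M : PersMod k P) : Prop := ∀ x, Subsingleton (M.carrier x)

/-- The direct sum of two persistence modules. -/
def dsum (M N : PersMod k P) : PersMod k P where
  carrier x := M.carrier x × N.carrier x
  map h := (M.map h).prodMap (N.map h)
  map_id x := by
    refine LinearMap.ext fun v => ?_
    simp [M.map_id, N.map_id]
  map_comp h₁ h₂ := by
    refine LinearMap.ext fun v => ?_
    simp [M.map_comp h₁ h₂, N.map_comp h₁ h₂]

/-- A persistence module is indecomposable if it is nonzero and in any way of writing it as
a direct sum of two modules, one of the summands is zero. -/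
def Indecomposable (M : PersMod k P) : Prop :=
  ¬ IsZeroMod M ∧ ∀ A B : PersMod k P, Isom M (dsum A B) → IsZeroMod A ∨ IsZeroMod B

end Core

section Interleaving

variable {k : Type} [Field k] {n : ℕ}

/-- A point of `ℝⁿ`. -/
abbrev Pt (n : ℕ) := Fin n → ℝ

/-- The shift of a point of `ℝⁿ` by `ε` in every coordinate. -/
def shiftPt (r : Pt n) (ε : ℝ) : Pt n := fun i => r i + ε

lemma le_shiftPt (r : Pt n) {ε : ℝ} (hε : 0 ≤ ε) : r ≤ shiftPt r ε :=
  fun _ => le_add_of_nonneg_right hε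

lemma shiftPt_mono {r s : Pt n} (h : r ≤ s) (ε : ℝ) : shiftPt r ε ≤ shiftPt s ε :=
  fun i => by show r i + ε ≤ s i + ε; linarith [h i]

/-- An `ε`-interleaving between two persistence modules over `ℝⁿ`: morphisms
`f : M → N[ε]` and `g : N → M[ε]` whose composites are the `2ε`-shift morphisms. -/
def Interleaved (M N : PersMod k (Pt n)) (ε : ℝ) : Prop :=
  0 ≤ ε ∧
  ∃ (f : ∀ x : Pt n, M.carrier x →ₗ[k] N.carrier (shiftPt x ε))
    (g : ∀ x : Pt n, N.carrier x →ₗ[k] M.carrier (shiftPt x ε)),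
    (∀ (x y : Pt n) (h : x ≤ y),
        (f y).comp (M.map h) = (N.map (shiftPt_mono h ε)).comp (f x)) ∧
    (∀ (x y : Pt n) (h : x ≤ y),
        (g y).comp (N.map h) = (M.map (shiftPt_mono h ε)).comp (g x)) ∧
    (∀ (x : Pt n) (h : x ≤ shiftPt (shiftPt x ε) ε),
        (g (shiftPt x ε)).comp (f x) = M.map h) ∧
    (∀ (x : Pt n) (h : x ≤ shiftPt (shiftPt x ε) ε),
        (f (shiftPt x ε)).comp (g x) = N.map h)

/-- The interleaving distance, with value `∞` if no interleaving exists. -/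
noncomputable def dI (M N : PersMod k (Pt n)) : ENNReal :=
  sInf (ENNReal.ofReal '' {ε : ℝ | Interleaved M N ε})

/-- `M` is `ε`-trivial if all structure maps `M(r) → M(r+ε)` vanish. -/
def EpsTrivial (M : PersMod k (Pt n)) (ε : ℝ) : Prop :=
  0 ≤ ε ∧ ∀ (r : Pt n) (h : r ≤ shiftPt r ε), M.map h = 0

/-- `M` is strictly `ε`-trivial if it is `ε'`-trivial for some `ε' < ε`. -/
def StrictlyEpsTrivial (M : PersMod k (Pt n)) (ε : ℝ) : Prop :=
  ∃ ε' < ε, EpsTrivial M ε'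

/-- `M` is `ε`-indecomposable if it is the direct sum of an indecomposable module and a
strictly `ε`-trivial module. -/
def EpsIndecomposable (M : PersMod k (Pt n)) (ε : ℝ) : Prop :=
  ∃ A B : PersMod k (Pt n), Indecomposable A ∧ StrictlyEpsTrivial B ε ∧ Isom M (dsum A B)

end Interleaving

section FinitelyPresentable

variable {k : Type} [Field k] {P : Type} [PartialOrder P]

/-- The submodule of `k` underlying the value of the free module `P_q` at `s`:
everything if `q ≤ s`, zero otherwise. -/
noncomputable def pSub (k : Type) [Field k] (q s : P) : Submodule k k :=
  @ite _ (q ≤ s) (Classical.propDecidable _) ⊤ ⊥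

lemma pSub_mono (q : P) {s t : P} (h : s ≤ t) : pSub k q s ≤ pSub k q t := by
  unfold pSub
  split_ifs with h1 h2
  · exact le_rfl
  · exact absurd (h1.trans h) h2
  · exact bot_le
  · exact bot_le

/-- The free persistence module `P_q` generated at `q`: it has value `k` at `s ≥ q` and `0`
elsewhere, with identity structure maps wherever possible. -/
noncomputable def Pmod (k : Type) [Field k] (q : P) : PersMod k P where
  carrier s := ↥(pSub k q s)
  map h := Submodule.inclusion (pSub_mono q h)
  map_id s := rfl
  map_comp h₁ h₂ := rfl

/-- Finite direct sums of persistence modules. -/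
def fdsum {ι : Type} [Fintype ι] (Ms : ι → PersMod k P) : PersMod k P where
  carrier x := ∀ i, (Ms i).carrier x
  map h := LinearMap.pi fun i => ((Ms i).map h).comp (LinearMap.proj i)
  map_id x := by
    refine LinearMap.ext fun v => funext fun i => ?_
    simp [(Ms i).map_id]
  map_comp h₁ h₂ := by
    refine LinearMap.ext fun v => funext fun i => ?_
    simp [(Ms i).map_comp h₁ h₂]

/-- The cokernel of a morphism of persistence modules. -/
noncomputable def cokerMod {M N : PersMod k P} (f : Hom M N) : PersMod k P where
  carrier x := N.carrier x ⧸ LinearMap.range (f.app x)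
  map {x y} h := Submodule.mapQ _ _ (N.map h) (by
    rintro v hv
    obtain ⟨w, rfl⟩ := LinearMap.mem_range.mp hv
    simp only [Submodule.mem_comap, LinearMap.mem_range]
    refine ⟨M.map h w, ?_⟩
    have hnat := f.natural h
    calc (f.app y) (M.map h w) = ((f.app y).comp (M.map h)) w := rfl
      _ = ((N.map h).comp (f.app x)) w := by rw [hnat]
      _ = N.map h (f.app x w) := rfl)
  map_id x := by
    refine LinearMap.ext fun v => ?_
    obtain ⟨w, rfl⟩ := Submodule.Quotient.mk_surjective _ v
    rw [Submodule.mapQ_apply, N.map_id]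
    rfl
  map_comp h₁ h₂ := by
    refine LinearMap.ext fun v => ?_
    obtain ⟨w, rfl⟩ := Submodule.Quotient.mk_surjective _ v
    simp [Submodule.mapQ_apply, N.map_comp h₁ h₂]

/-- A persistence module is finitely presentable if it is isomorphic to the cokernel of a
morphism between finite direct sums of free modules `P_p`. -/
def FinitelyPresentable (M : PersMod k P) : Prop :=
  ∃ (ι κ : Type) (_ : Fintype ι) (_ : Fintype κ) (gp : ι → P) (rp : κ → P)
    (f : Hom (fdsum fun j => Pmod k (rp j)) (fdsum fun i => Pmod k (gp i))),
    Isom M (cokerMod f)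

end FinitelyPresentable

section FiniteGrid

variable {k : Type} [Field k] {n : ℕ}

/-- `r` dominates some point of the finite grid `Sⁿ`. -/
def finDom (S : Finset ℝ) (r : Pt n) : Prop := ∀ i, ∃ a ∈ S, a ≤ r i

lemma finDom_mono {S : Finset ℝ} {r r' : Pt n} (hd : finDom S r) (h : r ≤ r') :
    finDom S r' := fun i => by
  obtain ⟨a, ha, hle⟩ := hd i
  exact ⟨a, ha, hle.trans (h i)⟩

/-- The largest point of the finite grid `Sⁿ` below `r` (junk value if there is none). -/
noncomputable def finSup (S : Finset ℝ) (r : Pt n) : Pt n := fun i =>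
  if h : (S.filter (· ≤ r i)).Nonempty then (S.filter (· ≤ r i)).max' h else 0

lemma finSup_le {S : Finset ℝ} {r : Pt n} (hd : finDom S r) : finSup S r ≤ r := by
  intro i
  obtain ⟨a, ha, hle⟩ := hd i
  have hne : (S.filter (· ≤ r i)).Nonempty := ⟨a, Finset.mem_filter.mpr ⟨ha, hle⟩⟩
  rw [finSup, dif_pos hne]
  have := (S.filter (· ≤ r i)).max'_mem hne
  exact (Finset.mem_filter.mp this).2

lemma finSup_mono {S : Finset ℝ} {r r' : Pt n} (hd : finDom S r) (h : r ≤ r') :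
    finSup S r ≤ finSup S r' := by
  intro i
  obtain ⟨a, ha, hle⟩ := hd i
  have hne : (S.filter (· ≤ r i)).Nonempty := ⟨a, Finset.mem_filter.mpr ⟨ha, hle⟩⟩
  have hne' : (S.filter (· ≤ r' i)).Nonempty :=
    ⟨a, Finset.mem_filter.mpr ⟨ha, hle.trans (h i)⟩⟩
  simp only [finSup]
  rw [dif_pos hne, dif_pos hne']
  refine Finset.max'_subset hne ?_
  intro b hb
  rw [Finset.mem_filter] at hb ⊢
  exact ⟨hb.1, hb.2.trans (h i)⟩

/-- The submodule underlying the restriction-extension at `r`: everything if there is a grid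
point below `r` (so that the value there is `M(sup{p ∈ Sⁿ : p ≤ r})`), zero otherwise. -/
noncomputable def finExtSub (S : Finset ℝ) (M : PersMod k (Pt n)) (r : Pt n) :
    Submodule k (M.carrier (finSup S r)) :=
  @ite _ (finDom S r) (Classical.propDecidable _) ⊤ ⊥

/-- The restriction-extension `M_𝒫` of a persistence module `M : ℝⁿ → vec` along the
finite grid `𝒫 = Sⁿ`: its value at `r` is `M(sup{p ∈ Sⁿ : p ≤ r})` if there is a grid
point below `r`, and `0` otherwise, with the structure maps induced by those of `M`. -/
noncomputable def finRestExt (S : Finset ℝ) (M : PersMod k (Pt n)) : PersMod k (Pt n) where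
  carrier r := ↥(finExtSub S M r)
  map {r r'} h :=
    @dite _ (finDom S r) (Classical.propDecidable _)
      (fun hd =>
        (M.map (finSup_mono hd h)).restrict (p := finExtSub S M r) (q := finExtSub S M r')
          (fun x _ => by
            have hd' := finDom_mono hd h
            simp [finExtSub, if_pos hd']))
      (fun _ => 0)
  map_id r := by
    by_cases hd : finDom S r
    · rw [dif_pos hd]
      refine LinearMap.ext fun x => ?_
      apply Subtype.ext
      rw [LinearMap.restrict_apply]
      have h1 : M.map (finSup_mono hd (le_refl r)) = LinearMap.id := M.map_id _
      rw [h1]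
      rfl
    · rw [dif_neg hd]
      refine LinearMap.ext fun x => ?_
      have hx0 : x = 0 := by
        apply Subtype.ext
        have := x.2
        simpa [finExtSub, if_neg hd] using this
      rw [hx0]
      simp
  map_comp {r r' r''} h₁ h₂ := by
    by_cases hd : finDom S r
    · have hd' := finDom_mono hd h₁
      rw [dif_pos hd, dif_pos hd, dif_pos hd']
      refine LinearMap.ext fun x => ?_
      apply Subtype.ext
      simp only [LinearMap.coe_comp, Function.comp_apply, LinearMap.restrict_apply]
      have h3 : M.map ((finSup_mono hd h₁).trans (finSup_mono hd' h₂)) =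
          (M.map (finSup_mono hd' h₂)).comp (M.map (finSup_mono hd h₁)) := M.map_comp _ _
      calc (M.map (finSup_mono hd (h₁.trans h₂))) x.1
          = (M.map ((finSup_mono hd h₁).trans (finSup_mono hd' h₂))) x.1 := rfl
        _ = (M.map (finSup_mono hd' h₂)) ((M.map (finSup_mono hd h₁)) x.1) := by
            rw [h3]; rfl
    · rw [dif_neg hd, dif_neg hd]
      refine LinearMap.ext fun x => ?_
      simp

end FiniteGrid

end PersMod

/-!
Call `M` determined by the grid `Sⁿ` if `M` vanishes at every `r` with no grid point below it,
and otherwise the structure map `M(⌊r⌋) → M(r)` from the largest grid point `⌊r⌋ ≤ r` is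
bijective; this is exactly what makes the comparison morphism `M_𝒫 → M` an isomorphism.

A free module `P_q` with `q ∈ Sⁿ` is determined by `Sⁿ`, since `q ≤ r ↔ q ≤ ⌊r⌋`; hence so is the
cokernel of a morphism of such free modules, and a finitely presented module is determined by the
grid of all coordinates of its generators and relations.

Conversely, a module `M` determined by `Sⁿ` is presented by generators forming a basis of `M(p)`
at every grid point `p` and relations forming a basis of the kernel at `p` of the resulting
morphism onto `M`. Because both the free module and `M` are determined by `Sⁿ`, surjectivity and
exactness at an arbitrary `r` reduce to the grid point `⌊r⌋`, where they hold by construction.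
-/

namespace PersMod

section General

variable {k : Type} [Field k] {P : Type} [PartialOrder P]

theorem Isom.symm {M N : PersMod k P} (h : Isom M N) : Isom N M :=
  let ⟨f, g, hgf, hfg⟩ := h
  ⟨g, f, hfg, hgf⟩

theorem Isom.exists_bijective {M N : PersMod k P} (h : Isom M N) :
    ∃ f : Hom M N, ∀ x, Function.Bijective (f.app x) :=
  let ⟨f, g, hgf, hfg⟩ := h
  ⟨f, fun x => Function.bijective_iff_has_inverse.mpr
    ⟨g.app x, LinearMap.congr_fun (hgf x), LinearMap.congr_fun (hfg x)⟩⟩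

theorem isom_of_bijective {M N : PersMod k P} (f : Hom M N)
    (hf : ∀ x, Function.Bijective (f.app x)) : Isom M N := by
  let e x := LinearEquiv.ofBijective (f.app x) (hf x)
  refine ⟨f, ⟨fun x => (e x).symm.toLinearMap, fun {x y} h => ?_⟩,
    fun x => LinearMap.ext (e x).symm_apply_apply, fun x => LinearMap.ext (e x).apply_symm_apply⟩
  refine LinearMap.ext fun v => (e y).injective ?_
  have hnat := LinearMap.congr_fun (f.natural h) ((e x).symm v)
  simp only [LinearMap.comp_apply, LinearEquiv.coe_coe, LinearEquiv.apply_symm_apply] at hnat ⊢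
  rw [LinearEquiv.ofBijective_apply, hnat]
  exact congrArg _ ((e x).apply_symm_apply v).symm

theorem map_bijective_of_eq (M : PersMod k P) {x y : P} (h : x ≤ y) (e : x = y) :
    Function.Bijective (M.map h) := by
  subst e
  rw [M.map_id]
  exact Function.bijective_id

lemma Pmod.val_eq_zero {q r : P} (h : ¬ q ≤ r) (v : (Pmod k q).carrier r) : v.1 = 0 := by
  have hv := v.2
  simp only [pSub, if_neg h] at hv
  exact (Submodule.mem_bot k).mp hv

lemma Pmod.subsingleton {q r : P} (h : ¬ q ≤ r) : Subsingleton ((Pmod k q).carrier r) :=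
  ⟨fun a b => Subtype.ext ((Pmod.val_eq_zero h a).trans (Pmod.val_eq_zero h b).symm)⟩

lemma Pmod.map_bijective {q x y : P} (h : x ≤ y) (hiff : q ≤ x ↔ q ≤ y) :
    Function.Bijective ((Pmod k q).map h) := by
  refine ⟨Submodule.inclusion_injective (pSub_mono q h), fun v => ⟨⟨v.1, ?_⟩, rfl⟩⟩
  have hv := v.2
  simp only [pSub] at hv ⊢
  by_cases hq : q ≤ x <;> simp_all

lemma fdsum_map_bijective {ι : Type} [Fintype ι] (Ms : ι → PersMod k P) {x y : P} (h : x ≤ y)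
    (hb : ∀ i, Function.Bijective ((Ms i).map h)) : Function.Bijective ((fdsum Ms).map h) :=
  Function.Bijective.piMap hb

lemma fdsum_subsingleton {ι : Type} [Fintype ι] (Ms : ι → PersMod k P) {x : P}
    (hs : ∀ i, Subsingleton ((Ms i).carrier x)) : Subsingleton ((fdsum Ms).carrier x) :=
  @Pi.instSubsingleton _ _ hs

lemma cokerMod_map_mk {M N : PersMod k P} (f : Hom M N) {x y : P} (h : x ≤ y)
    (w : N.carrier x) :
    (cokerMod f).map h (Submodule.Quotient.mk w) = Submodule.Quotient.mk (N.map h w) := rfl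

lemma cokerMod_map_bijective {M N : PersMod k P} (f : Hom M N) {x y : P} (h : x ≤ y)
    (hM : Function.Bijective (M.map h)) (hN : Function.Bijective (N.map h)) :
    Function.Bijective ((cokerMod f).map h) := by
  refine ⟨fun a b hab => ?_, fun z => ?_⟩
  · obtain ⟨va, rfl⟩ := Submodule.Quotient.mk_surjective _ a
    obtain ⟨vb, rfl⟩ := Submodule.Quotient.mk_surjective _ b
    rw [cokerMod_map_mk, cokerMod_map_mk] at hab
    obtain ⟨u, hu⟩ := (Submodule.Quotient.eq _).mp hab
    rw [← map_sub] at hu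
    obtain ⟨u, rfl⟩ := hM.2 u
    have hnat := LinearMap.congr_fun (f.natural h) u
    rw [LinearMap.comp_apply, LinearMap.comp_apply, hu] at hnat
    exact (Submodule.Quotient.eq _).mpr ⟨u, hN.1 hnat.symm⟩
  · obtain ⟨w, rfl⟩ := Submodule.Quotient.mk_surjective _ z
    obtain ⟨w, rfl⟩ := hN.2 w
    exact ⟨Submodule.Quotient.mk w, rfl⟩

lemma cokerMod_subsingleton {M N : PersMod k P} (f : Hom M N) {x : P}
    [Subsingleton (N.carrier x)] : Subsingleton ((cokerMod f).carrier x) :=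
  (Submodule.Quotient.mk_surjective _).subsingleton

noncomputable def transfer (M : PersMod k P) {p : P} (v : M.carrier p) (r : P) : M.carrier r :=
  open Classical in if h : p ≤ r then M.map h v else 0

lemma transfer_of_le (M : PersMod k P) {p r : P} (v : M.carrier p) (h : p ≤ r) :
    M.transfer v r = M.map h v :=
  dif_pos h

lemma transfer_self (M : PersMod k P) {p : P} (v : M.carrier p) : M.transfer v p = v := by
  rw [transfer_of_le M v le_rfl, M.map_id, LinearMap.id_apply]

lemma transfer_of_not_le (M : PersMod k P) {p r : P} (v : M.carrier p) (h : ¬ p ≤ r) :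
    M.transfer v r = 0 :=
  dif_neg h

lemma map_transfer (M : PersMod k P) {p r r' : P} (v : M.carrier p) (hp : p ≤ r) (h : r ≤ r') :
    M.map h (M.transfer v r) = M.transfer v r' := by
  rw [transfer_of_le M v hp, transfer_of_le M v (hp.trans h), M.map_comp hp h,
    LinearMap.comp_apply]

lemma Hom.app_transfer {M N : PersMod k P} (f : Hom M N) {p : P} (v : M.carrier p) (r : P) :
    f.app r (M.transfer v r) = N.transfer (f.app p v) r := by
  by_cases h : p ≤ r
  · rw [transfer_of_le M v h, transfer_of_le N _ h, ← LinearMap.comp_apply, f.natural h,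
      LinearMap.comp_apply]
  · rw [transfer_of_not_le M v h, transfer_of_not_le N _ h, map_zero]

variable {ι : Type} [Fintype ι]

noncomputable abbrev freeMod (k : Type) [Field k] (q : ι → P) : PersMod k P :=
  fdsum fun i => Pmod k (q i)

noncomputable def freeGen [DecidableEq ι] (q : ι → P) (i : ι) : (freeMod k q).carrier (q i) :=
  fun j => ⟨if j = i then 1 else 0, by
    split_ifs with h
    · subst h
      simp [pSub]
    · exact zero_mem _⟩

noncomputable def freeLiftApp {N : PersMod k P} (q : ι → P) (v : ∀ i, N.carrier (q i)) (r : P) :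
    (freeMod k q).carrier r →ₗ[k] N.carrier r :=
  -- `(x i).1 = 0` unless `q i ≤ r`, so the junk value `0` of `transfer` never matters.
  ∑ i, LinearMap.toSpanSingleton k _ (N.transfer (v i) r) ∘ₗ (pSub k (q i) r).subtype ∘ₗ
    LinearMap.proj i

lemma freeLiftApp_apply {N : PersMod k P} (q : ι → P) (v : ∀ i, N.carrier (q i)) (r : P)
    (x : (freeMod k q).carrier r) :
    freeLiftApp q v r x = ∑ i, (x i).1 • N.transfer (v i) r := by
  simp only [freeLiftApp, LinearMap.coe_sum, LinearMap.coe_comp, Finset.sum_apply,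
    Function.comp_apply, LinearMap.toSpanSingleton_apply]
  rfl

noncomputable def freeLift {N : PersMod k P} (q : ι → P) (v : ∀ i, N.carrier (q i)) :
    Hom (freeMod k q) N where
  app := freeLiftApp q v
  natural {r r'} h := by
    refine LinearMap.ext fun x => ?_
    simp only [LinearMap.comp_apply, freeLiftApp_apply, map_sum, map_smul]
    refine Finset.sum_congr rfl fun i _ => ?_
    by_cases hi : q i ≤ r
    · rw [map_transfer N _ hi h]
      rfl
    · change (x i).1 • _ = (x i).1 • _
      rw [Pmod.val_eq_zero hi (x i), zero_smul, zero_smul]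

lemma freeLift_app_freeGen [DecidableEq ι] {N : PersMod k P} (q : ι → P)
    (v : ∀ i, N.carrier (q i)) (i : ι) : (freeLift q v).app (q i) (freeGen q i) = v i := by
  change freeLiftApp q v (q i) (freeGen q i) = v i
  rw [freeLiftApp_apply, Finset.sum_eq_single i (fun j _ hj => by simp only [freeGen, if_neg hj,
    zero_smul]) (fun h => absurd (Finset.mem_univ i) h)]
  simp only [freeGen, ↓reduceIte, one_smul, transfer_self]

lemma Hom.app_freeLift_eq_zero {N N' : PersMod k P} (σ : Hom N N') (q : ι → P)
    {v : ∀ i, N.carrier (q i)} (hv : ∀ i, σ.app (q i) (v i) = 0) (r : P)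
    (x : (freeMod k q).carrier r) : σ.app r ((freeLift q v).app r x) = 0 := by
  change σ.app r (freeLiftApp q v r x) = 0
  simp only [freeLiftApp_apply, map_sum, map_smul, σ.app_transfer, hv]
  simp [transfer]

noncomputable def cokerDesc {R F N : PersMod k P} (ρ : Hom R F) (σ : Hom F N)
    (h : ∀ x, LinearMap.range (ρ.app x) ≤ LinearMap.ker (σ.app x)) : Hom (cokerMod ρ) N where
  app x := (LinearMap.range (ρ.app x)).liftQ (σ.app x) (h x)
  natural {x y} hxy := by
    refine LinearMap.ext fun v => ?_
    obtain ⟨w, rfl⟩ := Submodule.Quotient.mk_surjective _ v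
    exact LinearMap.congr_fun (σ.natural hxy) w

theorem isom_cokerMod_of_exact {R F N : PersMod k P} (ρ : Hom R F) (σ : Hom F N)
    (hexact : ∀ x, LinearMap.range (ρ.app x) = LinearMap.ker (σ.app x))
    (hsurj : ∀ x, Function.Surjective (σ.app x)) : Isom (cokerMod ρ) N :=
  isom_of_bijective (cokerDesc ρ σ fun x => (hexact x).le) fun x =>
    ⟨LinearMap.ker_eq_bot.mp (Submodule.ker_liftQ_eq_bot' _ _ (hexact x)),
      LinearMap.range_eq_top.mp
        ((Submodule.range_liftQ _ _ _).trans (LinearMap.range_eq_top.mpr (hsurj x)))⟩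

end General

section Grid

variable {k : Type} [Field k] {n : ℕ} {S : Finset ℝ}

lemma finDom_of_le {q r : Pt n} (hq : ∀ i, q i ∈ S) (h : q ≤ r) : finDom S r :=
  fun i => ⟨q i, hq i, h i⟩

lemma finSup_mem {r : Pt n} (hd : finDom S r) (i : Fin n) : finSup S r i ∈ S := by
  obtain ⟨a, ha, hle⟩ := hd i
  have hne : (S.filter (· ≤ r i)).Nonempty := ⟨a, Finset.mem_filter.mpr ⟨ha, hle⟩⟩
  rw [finSup, dif_pos hne]
  exact (Finset.mem_filter.mp (Finset.max'_mem _ hne)).1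

lemma le_finSup {q r : Pt n} (hq : ∀ i, q i ∈ S) (h : q ≤ r) : q ≤ finSup S r := by
  intro i
  have hmem : q i ∈ S.filter (· ≤ r i) := Finset.mem_filter.mpr ⟨hq i, h i⟩
  rw [finSup, dif_pos ⟨q i, hmem⟩]
  exact Finset.le_max' _ _ hmem

lemma le_finSup_iff {q r : Pt n} (hq : ∀ i, q i ∈ S) (hd : finDom S r) :
    q ≤ finSup S r ↔ q ≤ r :=
  ⟨fun h => h.trans (finSup_le hd), le_finSup hq⟩

lemma finSup_finSup {r : Pt n} (hd : finDom S r) : finSup S (finSup S r) = finSup S r :=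
  le_antisymm (finSup_le (finDom_of_le (finSup_mem hd) le_rfl)) (le_finSup (finSup_mem hd) le_rfl)

structure IsGridDetermined (S : Finset ℝ) (M : PersMod k (Pt n)) : Prop where
  map_finSup_bijective : ∀ (r : Pt n) (hd : finDom S r), Function.Bijective (M.map (finSup_le hd))
  subsingleton : ∀ r : Pt n, ¬ finDom S r → Subsingleton (M.carrier r)

lemma IsGridDetermined.of_hom_bijective {M N : PersMod k (Pt n)} (f : Hom M N)
    (hf : ∀ x, Function.Bijective (f.app x)) (hN : IsGridDetermined S N) :
    IsGridDetermined S M where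
  map_finSup_bijective r hd := by
    have hcomm : (f.app r) ∘ (M.map (finSup_le hd)) = (N.map (finSup_le hd)) ∘ (f.app _) :=
      congrArg DFunLike.coe (f.natural (finSup_le hd))
    rw [← (hf r).of_comp_iff', hcomm]
    exact (hN.map_finSup_bijective r hd).comp (hf _)
  subsingleton r hr :=
    haveI := hN.subsingleton r hr
    (hf r).1.subsingleton

lemma IsGridDetermined.of_isom {M N : PersMod k (Pt n)} (h : Isom M N)
    (hN : IsGridDetermined S N) : IsGridDetermined S M :=
  let ⟨f, hf⟩ := h.exists_bijective
  hN.of_hom_bijective f hf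

lemma isGridDetermined_pmod {q : Pt n} (hq : ∀ i, q i ∈ S) : IsGridDetermined S (Pmod k q) where
  map_finSup_bijective _ hd := Pmod.map_bijective _ (le_finSup_iff hq hd)
  subsingleton _ hr := Pmod.subsingleton fun h => hr (finDom_of_le hq h)

lemma IsGridDetermined.fdsum {ι : Type} [Fintype ι] {Ms : ι → PersMod k (Pt n)}
    (h : ∀ i, IsGridDetermined S (Ms i)) : IsGridDetermined S (fdsum Ms) where
  map_finSup_bijective r hd :=
    fdsum_map_bijective Ms _ fun i => (h i).map_finSup_bijective r hd
  subsingleton r hr := fdsum_subsingleton Ms fun i => (h i).subsingleton r hr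

lemma isGridDetermined_freeMod {ι : Type} [Fintype ι] {q : ι → Pt n} (hq : ∀ i j, q i j ∈ S) :
    IsGridDetermined S (freeMod k q) :=
  IsGridDetermined.fdsum fun i => isGridDetermined_pmod (hq i)

lemma IsGridDetermined.cokerMod {M N : PersMod k (Pt n)} (f : Hom M N)
    (hM : IsGridDetermined S M) (hN : IsGridDetermined S N) :
    IsGridDetermined S (cokerMod f) where
  map_finSup_bijective r hd :=
    cokerMod_map_bijective f _ (hM.map_finSup_bijective r hd) (hN.map_finSup_bijective r hd)
  subsingleton r hr :=
    haveI := hN.subsingleton r hr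
    cokerMod_subsingleton f

lemma finExtSub_eq_top (M : PersMod k (Pt n)) {r : Pt n} (hd : finDom S r) :
    finExtSub S M r = ⊤ :=
  if_pos hd

lemma finExtSub_eq_bot (M : PersMod k (Pt n)) {r : Pt n} (hr : ¬ finDom S r) :
    finExtSub S M r = ⊥ :=
  if_neg hr

lemma finRestExt_map_val (M : PersMod k (Pt n)) {r r' : Pt n} (h : r ≤ r') (hd : finDom S r)
    (x : (finRestExt S M).carrier r) :
    ((finRestExt S M).map h x).1 = M.map (finSup_mono hd h) x.1 := by
  simp only [finRestExt, dif_pos hd]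
  rfl

lemma finRestExt_map_of_not_finDom (M : PersMod k (Pt n)) {r r' : Pt n} (h : r ≤ r')
    (hr : ¬ finDom S r) : (finRestExt S M).map h = 0 := by
  simp only [finRestExt, dif_neg hr]
  rfl

lemma isGridDetermined_finRestExt (S : Finset ℝ) (M : PersMod k (Pt n)) :
    IsGridDetermined S (finRestExt S M) where
  map_finSup_bijective r hd := by
    have hd' := finDom_of_le (finSup_mem hd) le_rfl
    have hM := M.map_bijective_of_eq (finSup_mono hd' (finSup_le hd)) (finSup_finSup hd)
    refine ⟨fun x y hxy => Subtype.ext (hM.1 ?_), fun y => ?_⟩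
    · simpa only [finRestExt_map_val M _ hd'] using congrArg Subtype.val hxy
    · obtain ⟨x, hx⟩ := hM.2 y.1
      exact ⟨⟨x, by simp [finExtSub_eq_top M hd']⟩,
        Subtype.ext ((finRestExt_map_val M _ hd' _).trans hx)⟩
  subsingleton r hr := by
    refine ⟨fun x y => Subtype.ext ?_⟩
    have hx := x.2
    have hy := y.2
    simp only [finExtSub_eq_bot M hr, Submodule.mem_bot] at hx hy
    rw [hx, hy]

noncomputable def finRestExtApp (S : Finset ℝ) (M : PersMod k (Pt n)) (r : Pt n) :
    (finRestExt S M).carrier r →ₗ[k] M.carrier r :=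
  open Classical in
  if hd : finDom S r then (M.map (finSup_le hd)).comp (finExtSub S M r).subtype else 0

lemma finRestExtApp_apply (M : PersMod k (Pt n)) {r : Pt n} (hd : finDom S r)
    (x : (finRestExt S M).carrier r) : finRestExtApp S M r x = M.map (finSup_le hd) x.1 := by
  rw [finRestExtApp, dif_pos hd]
  rfl

lemma finRestExtApp_of_not_finDom (M : PersMod k (Pt n)) {r : Pt n} (hr : ¬ finDom S r) :
    finRestExtApp S M r = 0 :=
  dif_neg hr

noncomputable def finRestExtHom (S : Finset ℝ) (M : PersMod k (Pt n)) :
    Hom (finRestExt S M) M where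
  app := finRestExtApp S M
  natural {r r'} h := by
    refine LinearMap.ext fun x => ?_
    by_cases hd : finDom S r
    · rw [LinearMap.comp_apply, LinearMap.comp_apply, finRestExtApp_apply M (finDom_mono hd h),
        finRestExtApp_apply M hd, finRestExt_map_val M h hd, ← LinearMap.comp_apply,
        ← M.map_comp, ← LinearMap.comp_apply, ← M.map_comp]
    · rw [LinearMap.comp_apply, LinearMap.comp_apply, finRestExt_map_of_not_finDom M h hd,
        finRestExtApp_of_not_finDom M hd, LinearMap.zero_apply, map_zero, LinearMap.zero_apply,
        map_zero]

lemma IsGridDetermined.isom_finRestExt {M : PersMod k (Pt n)} (hM : IsGridDetermined S M) :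
    Isom M (finRestExt S M) := by
  refine (isom_of_bijective (finRestExtHom S M) fun r => ?_).symm
  by_cases hd : finDom S r
  · have hb := hM.map_finSup_bijective r hd
    refine ⟨fun x y hxy => ?_, fun y => ?_⟩
    · change finRestExtApp S M r x = finRestExtApp S M r y at hxy
      rw [finRestExtApp_apply M hd, finRestExtApp_apply M hd] at hxy
      exact Subtype.ext (hb.1 hxy)
    · obtain ⟨x, hx⟩ := hb.2 y
      refine ⟨⟨x, by simp [finExtSub_eq_top M hd]⟩, ?_⟩
      exact (finRestExtApp_apply M hd _).trans hx
  · have := hM.subsingleton r hd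
    have := (isGridDetermined_finRestExt S M).subsingleton r hd
    exact ⟨fun _ _ _ => Subsingleton.elim _ _, fun _ => ⟨0, Subsingleton.elim _ _⟩⟩

end Grid

section Presentation

variable {k : Type} [Field k] {n : ℕ} {S : Finset ℝ}

lemma Hom.surjective_app_of_finSup {F N : PersMod k (Pt n)} (hN : IsGridDetermined S N)
    (σ : Hom F N) (h : ∀ r, finDom S r → Function.Surjective (σ.app (finSup S r))) (r : Pt n) :
    Function.Surjective (σ.app r) := by
  by_cases hd : finDom S r
  · have hcomm : (σ.app r) ∘ (F.map (finSup_le hd)) = (N.map (finSup_le hd)) ∘ (σ.app _) :=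
      congrArg DFunLike.coe (σ.natural (finSup_le hd))
    exact Function.Surjective.of_comp (g := F.map (finSup_le hd))
      (hcomm ▸ (hN.map_finSup_bijective r hd).2.comp (h r hd))
  · have := hN.subsingleton r hd
    exact fun _ => ⟨0, Subsingleton.elim _ _⟩

lemma Hom.ker_le_range_of_finSup {R F N : PersMod k (Pt n)} (hF : IsGridDetermined S F)
    (hN : IsGridDetermined S N) (ρ : Hom R F) (σ : Hom F N)
    (h : ∀ r, finDom S r →
      LinearMap.ker (σ.app (finSup S r)) ≤ LinearMap.range (ρ.app (finSup S r))) (r : Pt n) :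
    LinearMap.ker (σ.app r) ≤ LinearMap.range (ρ.app r) := by
  intro x hx
  by_cases hd : finDom S r
  · obtain ⟨y, rfl⟩ := (hF.map_finSup_bijective r hd).2 x
    have hσ := LinearMap.congr_fun (σ.natural (finSup_le hd)) y
    rw [LinearMap.comp_apply, LinearMap.comp_apply, LinearMap.mem_ker.mp hx,
      ← map_zero (N.map (finSup_le hd))] at hσ
    obtain ⟨z, rfl⟩ := h r hd ((hN.map_finSup_bijective r hd).1 hσ.symm)
    exact ⟨R.map (finSup_le hd) z, LinearMap.congr_fun (ρ.natural (finSup_le hd)) z⟩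
  · have := hF.subsingleton r hd
    rw [Subsingleton.elim x 0]
    exact zero_mem _

def gridPoint (g : Fin n → S) : Pt n := fun i => g i

noncomputable def finSupIdx {r : Pt n} (hd : finDom S r) : Fin n → S :=
  fun i => ⟨finSup S r i, finSup_mem hd i⟩

variable (S) (N : PersMod k (Pt n))

abbrev GenIdx : Type := Σ g : Fin n → S, Fin (Module.finrank k (N.carrier (gridPoint g)))

noncomputable def genMap : Hom (freeMod k fun i : GenIdx S N => gridPoint i.1) N :=
  freeLift _ fun i => Module.finBasis k _ i.2

abbrev RelIdx : Type :=
  Σ g : Fin n → S, Fin (Module.finrank k (LinearMap.ker ((genMap S N).app (gridPoint g))))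

noncomputable def relMap :
    Hom (freeMod k fun j : RelIdx S N => gridPoint j.1)
      (freeMod k fun i : GenIdx S N => gridPoint i.1) :=
  freeLift _ fun j => (Module.finBasis k _ j.2).1

variable {S N}

lemma gridPoint_finSupIdx {r : Pt n} (hd : finDom S r) : gridPoint (finSupIdx hd) = finSup S r :=
  rfl

lemma genMap_app_freeGen (i : GenIdx S N) :
    (genMap S N).app (gridPoint i.1) (freeGen _ i) = Module.finBasis k _ i.2 :=
  freeLift_app_freeGen _ _ _

lemma relMap_app_freeGen (j : RelIdx S N) :
    (relMap S N).app (gridPoint j.1) (freeGen _ j) = (Module.finBasis k _ j.2).1 :=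
  freeLift_app_freeGen _ _ _

lemma genMap_app_gridPoint_surjective (g : Fin n → S) :
    Function.Surjective ((genMap S N).app (gridPoint g)) := by
  let b := Module.finBasis k (N.carrier (gridPoint g))
  refine LinearMap.range_eq_top.mp (eq_top_iff.mpr ?_)
  rw [← b.span_eq, Submodule.span_le]
  rintro _ ⟨c, rfl⟩
  exact ⟨_, genMap_app_freeGen (⟨g, c⟩ : GenIdx S N)⟩

lemma ker_genMap_app_gridPoint_le (g : Fin n → S) :
    LinearMap.ker ((genMap S N).app (gridPoint g)) ≤
      LinearMap.range ((relMap S N).app (gridPoint g)) := by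
  intro x hx
  let b := Module.finBasis k (LinearMap.ker ((genMap S N).app (gridPoint g)))
  change Subtype.val (⟨x, hx⟩ : LinearMap.ker ((genMap S N).app (gridPoint g))) ∈ _
  rw [← b.sum_repr ⟨x, hx⟩, Submodule.coe_sum]
  refine Submodule.sum_mem _ fun c _ => Submodule.smul_mem _ _ ?_
  exact ⟨_, relMap_app_freeGen (⟨g, c⟩ : RelIdx S N)⟩

lemma genMap_surjective (hN : IsGridDetermined S N) (r : Pt n) :
    Function.Surjective ((genMap S N).app r) :=
  (genMap S N).surjective_app_of_finSup hN
    (fun _ hd => gridPoint_finSupIdx hd ▸ genMap_app_gridPoint_surjective _) r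

lemma range_relMap (hN : IsGridDetermined S N) (r : Pt n) :
    LinearMap.range ((relMap S N).app r) = LinearMap.ker ((genMap S N).app r) := by
  refine le_antisymm ?_ ?_
  · rintro _ ⟨y, rfl⟩
    exact (genMap S N).app_freeLift_eq_zero _ (fun j => (Module.finBasis k _ j.2).2) r y
  · exact (relMap S N).ker_le_range_of_finSup (isGridDetermined_freeMod fun j i => (j.1 i).2) hN _
      (fun _ hd => gridPoint_finSupIdx hd ▸ ker_genMap_app_gridPoint_le _) r

theorem IsGridDetermined.finitelyPresentable (hN : IsGridDetermined S N) :
    FinitelyPresentable N :=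
  ⟨GenIdx S N, RelIdx S N, inferInstance, inferInstance, _, _, relMap S N,
    (isom_cokerMod_of_exact _ _ (range_relMap hN) (genMap_surjective hN)).symm⟩

end Presentation

noncomputable def coords {n : ℕ} {ι : Type} [Fintype ι] (q : ι → Pt n) : Finset ℝ :=
  Finset.univ.image fun p : ι × Fin n => q p.1 p.2

lemma mem_coords {n : ℕ} {ι : Type} [Fintype ι] (q : ι → Pt n) (i : ι) (j : Fin n) :
    q i j ∈ coords q :=
  Finset.mem_image_of_mem _ (Finset.mem_univ (i, j))

end PersMod

open PersMod

theorem finitelyPresentable_iff_finite_grid_general (k : Type) [Field k] (n : ℕ)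
    (M : PersMod k (Pt n)) :
    M.FinitelyPresentable ↔ ∃ S : Finset ℝ, Isom M (finRestExt S M) := by
  constructor
  · rintro ⟨ι, κ, _, _, gp, rp, f, hM⟩
    have hgen : ∀ i j, gp i j ∈ coords gp ∪ coords rp := fun i j =>
      Finset.mem_union_left _ (mem_coords gp i j)
    have hrel : ∀ i j, rp i j ∈ coords gp ∪ coords rp := fun i j =>
      Finset.mem_union_right _ (mem_coords rp i j)
    exact ⟨_, (((isGridDetermined_freeMod hrel).cokerMod f (isGridDetermined_freeMod hgen)).of_isom
      hM).isom_finRestExt⟩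
  · rintro ⟨S, hM⟩
    exact ((isGridDetermined_finRestExt S M).of_isom hM).finitelyPresentable

/-- A persistence module `M : ℝⁿ → vec` is finitely presentable if and only if it is
isomorphic to its restriction-extension along some finite grid. -/
theorem finitelyPresentable_iff_finite_grid (k : Type) [Field k] (n : ℕ) (hn : 1 ≤ n)
    (M : PersMod k (Pt n)) :
    M.FinitelyPresentable ↔ ∃ S : Finset ℝ, Isom M (finRestExt S M) :=
  finitelyPresentable_iff_finite_grid_general k n M
end

section
/- Let 𝒞 be a category, let 𝒫 be a poset, and let U, V ⊆ 𝒫 be full subposets with U ∪ V = 𝒫 satisfying: (a) for every u ∈ U and v ∈ V with u ≤ v, the subposet U ∩ V ∩ [u,v] is connected; and (b) for every v ∈ V and u ∈ U with v ≤ u, the subposet U ∩ V ∩ [v,u] is connected. Then, for every pair of functors M : U → 𝒞 and N : V → 𝒞 with M|_{U∩V} = N|_{U∩V}, there exists a unique functor L : 𝒫 → 𝒞 such that L|_U = M and L|_V = N. -/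
open CategoryTheory

section PosetFunctors

variable {P : Type} [PartialOrder P] {C : Type*} [Category C]

/-- The inclusion functor of a full subposet into the ambient poset. -/
def posetIncl (S : Set P) : ↥S ⥤ P :=
  Monotone.functor (f := (Subtype.val : ↥S → P)) (fun _ _ h => h)

/-- The restriction of a functor defined on a poset to a full subposet. -/
def restrF (F : P ⥤ C) (S : Set P) : ↥S ⥤ C := posetIncl S ⋙ F

/-- The restriction, to a smaller full subposet, of a functor defined on a full subposet. -/
def restrSubF {S T : Set P} (h : S ⊆ T) (F : ↥T ⥤ C) : ↥S ⥤ C :=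
  Monotone.functor (f := Set.inclusion h) (fun _ _ hle => hle) ⋙ F

/-- A subset of a poset is connected (as a poset) if it is nonempty and any two of
its elements are joined by a finite zigzag of comparable elements inside the subset. -/
def ConnectedSubposet (S : Set P) : Prop :=
  S.Nonempty ∧ ∀ x ∈ S, ∀ y ∈ S, ∃ (m : ℕ) (p : ℕ → P),
    p 0 = x ∧ p m = y ∧ (∀ i ≤ m, p i ∈ S) ∧
    ∀ i < m, p i ≤ p (i + 1) ∨ p (i + 1) ≤ p i

end PosetFunctors

/-!
Put `L p := M p` for `p ∈ U` and `L p := N p` otherwise. A relation `u ≤ v` with `u ∈ U`,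
`v ∈ V` is sent to `M (u ≤ w) ≫ N (w ≤ v)` for a pivot `w ∈ U ∩ V ∩ [u, v]`. Since `M` and `N`
agree on `U ∩ V`, this composite does not change when the pivot moves along `w ≤ w'`, so by
connectedness it does not depend on the pivot; functoriality then follows by comparing pivots
case by case. Uniqueness holds because every relation of `P` is a composite of relations inside
`U` or inside `V`.
-/

open Set

section Gluing

variable {P : Type} [PartialOrder P] {C : Type*} [Category C]

theorem ConnectedSubposet.constant {S : Set P} (hS : ConnectedSubposet S) {α : Sort*}
    (f : S → α) (hf : ∀ x y : S, x ≤ y → f x = f y) (x y : S) : f x = f y := by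
  obtain ⟨m, c, hc0, hcm, hcS, hzigzag⟩ := hS.2 x x.2 y y.2
  have hchain : ∀ i (hi : i ≤ m), f x = f ⟨c i, hcS i hi⟩ := by
    intro i
    induction i with
    | zero => exact fun _ => congrArg f (Subtype.ext hc0.symm)
    | succ i ih =>
      intro hi
      rcases hzigzag i hi with hle | hle
      · exact (ih (by omega)).trans (hf _ _ hle)
      · exact (ih (by omega)).trans (hf _ _ hle).symm
  exact (hchain m le_rfl).trans (congrArg f (Subtype.ext hcm))

def HasPivots (A B : Set P) : Prop :=
  ∀ p ∈ A, ∀ q ∈ B, p ≤ q → (A ∩ B ∩ Icc p q).Nonempty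

def HasConnectedPivots (A B : Set P) : Prop :=
  ∀ p ∈ A, ∀ q ∈ B, p ≤ q → ConnectedSubposet (A ∩ B ∩ Icc p q)

theorem HasConnectedPivots.hasPivots {A B : Set P} (h : HasConnectedPivots A B) :
    HasPivots A B :=
  fun p hp q hq hpq => (h p hp q hq hpq).1

/-- A functor on the full subposet `A` whose value at `p` is `X p` on the nose, so that functors on
different subposets can be compared without `eqToHom`. -/
structure LocalFunctor (X : P → C) (A : Set P) where
  map ⦃p q : P⦄ : p ∈ A → q ∈ A → p ≤ q → (X p ⟶ X q)
  map_id ⦃p : P⦄ (hp : p ∈ A) : map hp hp le_rfl = 𝟙 (X p)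
  map_comp ⦃p q r : P⦄ (hp : p ∈ A) (hq : q ∈ A) (hr : r ∈ A) (hpq : p ≤ q)
    (hqr : q ≤ r) : map hp hq hpq ≫ map hq hr hqr = map hp hr (hpq.trans hqr)

namespace LocalFunctor

variable {X : P → C} {A B : Set P}

def ofFunctor (F : ↥A ⥤ C) (hX : ∀ x : A, F.obj x = X x) : LocalFunctor X A where
  map p q hp hq h := eqToHom (hX ⟨p, hp⟩).symm ≫
    F.map (homOfLE (show (⟨p, hp⟩ : A) ≤ ⟨q, hq⟩ from h)) ≫ eqToHom (hX ⟨q, hq⟩)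
  map_id p hp := by simp
  map_comp p q r hp hq hr hpq hqr := by simp [← F.map_comp_assoc]

def Agree (a : LocalFunctor X A) (b : LocalFunctor X B) : Prop :=
  ∀ ⦃p q : P⦄ (hp : p ∈ A ∩ B) (hq : q ∈ A ∩ B) (h : p ≤ q),
    a.map hp.1 hq.1 h = b.map hp.2 hq.2 h

theorem agree_ofFunctor {U V : Set P} {M : ↥U ⥤ C} {N : ↥V ⥤ C}
    (hM : ∀ x : U, M.obj x = X x) (hN : ∀ x : V, N.obj x = X x)
    (hMN : restrSubF inter_subset_left M = restrSubF inter_subset_right N) :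
    (ofFunctor M hM).Agree (ofFunctor N hN) := by
  intro p q hp hq h
  have hobj : ∀ {r : P} (hr : r ∈ U ∩ V), M.obj ⟨r, hr.1⟩ = N.obj ⟨r, hr.2⟩ :=
    fun hr => Functor.congr_obj hMN ⟨_, hr⟩
  have hmap : M.map (homOfLE (show (⟨p, hp.1⟩ : U) ≤ ⟨q, hq.1⟩ from h)) = eqToHom (hobj hp) ≫
      N.map (homOfLE (show (⟨p, hp.2⟩ : V) ≤ ⟨q, hq.2⟩ from h)) ≫ eqToHom (hobj hq).symm :=
    Functor.congr_hom hMN (homOfLE (show (⟨p, hp⟩ : ↥(U ∩ V)) ≤ ⟨q, hq⟩ from h))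
  simp [ofFunctor, hmap]

namespace Agree

variable {a : LocalFunctor X A} {b : LocalFunctor X B}

theorem symm (hab : a.Agree b) : b.Agree a :=
  fun _ _ hp hq h => (hab ⟨hp.2, hp.1⟩ ⟨hq.2, hq.1⟩ h).symm

theorem map_comp_map_of_mem_left (hab : a.Agree b) {p w q : P} (hp : p ∈ A)
    (hw : w ∈ A ∩ B ∩ Icc p q) (hq : q ∈ A ∩ B) :
    a.map hp hw.1.1 hw.2.1 ≫ b.map hw.1.2 hq.2 hw.2.2 =
      a.map hp hq.1 (hw.2.1.trans hw.2.2) := by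
  rw [← hab hw.1 hq, a.map_comp]

theorem map_comp_map_of_mem_right (hab : a.Agree b) {p w q : P} (hp : p ∈ A ∩ B)
    (hw : w ∈ A ∩ B ∩ Icc p q) (hq : q ∈ B) :
    a.map hp.1 hw.1.1 hw.2.1 ≫ b.map hw.1.2 hq hw.2.2 =
      b.map hp.2 hq (hw.2.1.trans hw.2.2) := by
  rw [hab hp hw.1, b.map_comp]

theorem map_comp_map_eq_of_connected (hab : a.Agree b) {p q w w' : P} (hp : p ∈ A) (hq : q ∈ B)
    (hconn : ConnectedSubposet (A ∩ B ∩ Icc p q))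
    (hw : w ∈ A ∩ B ∩ Icc p q) (hw' : w' ∈ A ∩ B ∩ Icc p q) :
    a.map hp hw.1.1 hw.2.1 ≫ b.map hw.1.2 hq hw.2.2 =
      a.map hp hw'.1.1 hw'.2.1 ≫ b.map hw'.1.2 hq hw'.2.2 := by
  refine hconn.constant (fun v => a.map hp v.2.1.1 v.2.2.1 ≫ b.map v.2.1.2 hq v.2.2.2)
    (fun v v' hvv' => ?_) ⟨w, hw⟩ ⟨w', hw'⟩
  rw [← a.map_comp hp v.2.1.1 v'.2.1.1 v.2.2.1 hvv', hab v.2.1 v'.2.1 hvv', Category.assoc,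
    b.map_comp]

end Agree

end LocalFunctor

structure IsGlue {X : P → C} {A B : Set P} (φ : ∀ ⦃p q : P⦄, p ≤ q → (X p ⟶ X q))
    (a : LocalFunctor X A) (b : LocalFunctor X B) : Prop where
  eq_left ⦃p q : P⦄ (hp : p ∈ A) (hq : q ∈ A) (h : p ≤ q) : φ h = a.map hp hq h
  eq_right ⦃p q : P⦄ (hp : p ∈ B) (hq : q ∈ B) (h : p ≤ q) : φ h = b.map hp hq h
  eq_left_right ⦃p w q : P⦄ (hp : p ∈ A) (hq : q ∈ B) (hw : w ∈ A ∩ B ∩ Icc p q)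
    (h : p ≤ q) : φ h = a.map hp hw.1.1 hw.2.1 ≫ b.map hw.1.2 hq hw.2.2
  eq_right_left ⦃p w q : P⦄ (hp : p ∈ B) (hq : q ∈ A) (hw : w ∈ B ∩ A ∩ Icc p q)
    (h : p ≤ q) : φ h = b.map hp hw.1.1 hw.2.1 ≫ a.map hw.1.2 hq hw.2.2

namespace IsGlue

variable {X : P → C} {A B : Set P} {φ : ∀ ⦃p q : P⦄, p ≤ q → (X p ⟶ X q)}
  {a : LocalFunctor X A} {b : LocalFunctor X B}

theorem symm (hφ : IsGlue φ a b) : IsGlue φ b a :=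
  ⟨hφ.eq_right, hφ.eq_left, hφ.eq_right_left, hφ.eq_left_right⟩

theorem comp_eq_of_mem_left (hφ : IsGlue φ a b) (hab : a.Agree b) (hAB : A ∪ B = univ)
    (hpAB : HasPivots A B) (hpBA : HasPivots B A) {p q r : P} (hp : p ∈ A)
    (hpq : p ≤ q) (hqr : q ≤ r) : φ hpq ≫ φ hqr = φ (hpq.trans hqr) := by
  have hq : q ∈ A ∪ B := hAB ▸ mem_univ q
  have hr : r ∈ A ∪ B := hAB ▸ mem_univ r
  rcases hq with hq | hq <;> rcases hr with hr | hr
  · rw [hφ.eq_left hp hq, hφ.eq_left hq hr, hφ.eq_left hp hr, a.map_comp]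
  · obtain ⟨w, hw⟩ := hpAB q hq r hr hqr
    rw [hφ.eq_left hp hq, hφ.eq_left_right hq hr hw,
      hφ.eq_left_right hp hr ⟨hw.1, hpq.trans hw.2.1, hw.2.2⟩, ← Category.assoc, a.map_comp]
  · obtain ⟨w, hw⟩ := hpBA q hq r hr hqr
    obtain ⟨v, hv⟩ := hpAB p hp q hq hpq
    rw [hφ.eq_left_right hp hq hv, hφ.eq_right_left hq hr hw, hφ.eq_left hp hr,
      Category.assoc, ← Category.assoc (b.map _ _ _), b.map_comp,
      ← hab ⟨hv.1.1, hv.1.2⟩ ⟨hw.1.2, hw.1.1⟩, ← Category.assoc, a.map_comp, a.map_comp]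
  · obtain ⟨v, hv⟩ := hpAB p hp q hq hpq
    rw [hφ.eq_left_right hp hq hv, hφ.eq_right hq hr,
      hφ.eq_left_right hp hr ⟨hv.1, hv.2.1, hv.2.2.trans hqr⟩, Category.assoc, b.map_comp]

end IsGlue

section Glue

variable {X : P → C} {U V : Set P} (a : LocalFunctor X U) (b : LocalFunctor X V)

open Classical in
noncomputable def glueMap (hUV : U ∪ V = univ) (hpUV : HasPivots U V) (hpVU : HasPivots V U)
    ⦃p q : P⦄ (h : p ≤ q) : X p ⟶ X q :=
  have hV : Uᶜ ⊆ V := compl_subset_iff_union.2 hUV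
  if hp : p ∈ U then
    if hq : q ∈ U then a.map hp hq h
    else
      have hw := (hpUV p hp q (hV hq) h).some_mem
      a.map hp hw.1.1 hw.2.1 ≫ b.map hw.1.2 (hV hq) hw.2.2
  else
    if hq : q ∈ U then
      have hw := (hpVU p (hV hp) q hq h).some_mem
      b.map (hV hp) hw.1.1 hw.2.1 ≫ a.map hw.1.2 hq hw.2.2
    else b.map (hV hp) (hV hq) h

theorem isGlue_glueMap (hab : a.Agree b) (hUV : U ∪ V = univ) (h₁ : HasConnectedPivots U V)
    (h₂ : HasConnectedPivots V U) :
    IsGlue (glueMap a b hUV h₁.hasPivots h₂.hasPivots) a b where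
  eq_left p q hp hq h := by rw [glueMap, dif_pos hp, dif_pos hq]
  eq_right p q hp hq h := by
    by_cases hpU : p ∈ U <;> by_cases hqU : q ∈ U <;>
      simp only [glueMap, hpU, hqU, dif_pos, dif_neg, not_false_eq_true]
    · exact hab ⟨hpU, hp⟩ ⟨hqU, hq⟩ h
    · exact hab.map_comp_map_of_mem_right ⟨hpU, hp⟩ (Nonempty.some_mem _) hq
    · exact hab.symm.map_comp_map_of_mem_left hp (Nonempty.some_mem _) ⟨hq, hqU⟩
  eq_left_right p w q hp hq hw h := by
    by_cases hqU : q ∈ U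
    · rw [glueMap, dif_pos hp, dif_pos hqU, hab.map_comp_map_of_mem_left hp hw ⟨hqU, hq⟩]
    · rw [glueMap, dif_pos hp, dif_neg hqU]
      exact hab.map_comp_map_eq_of_connected hp hq (h₁ p hp q hq h) (Nonempty.some_mem _) hw
  eq_right_left p w q hp hq hw h := by
    by_cases hpU : p ∈ U
    · rw [glueMap, dif_pos hpU, dif_pos hq,
        hab.symm.map_comp_map_of_mem_right ⟨hp, hpU⟩ hw hq]
    · rw [glueMap, dif_neg hpU, dif_pos hq]
      exact hab.symm.map_comp_map_eq_of_connected hp hq (h₂ p hp q hq h)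
        (Nonempty.some_mem _) hw

noncomputable def glue (hab : a.Agree b) (hUV : U ∪ V = univ) (h₁ : HasConnectedPivots U V)
    (h₂ : HasConnectedPivots V U) : P ⥤ C where
  obj := X
  map f := glueMap a b hUV h₁.hasPivots h₂.hasPivots (leOfHom f)
  map_id p := by
    have hφ := isGlue_glueMap a b hab hUV h₁ h₂
    by_cases hp : p ∈ U
    · rw [hφ.eq_left hp hp]
      exact a.map_id hp
    · have hp := compl_subset_iff_union.2 hUV hp
      rw [hφ.eq_right hp hp]
      exact b.map_id hp
  map_comp {p _ _} f g := by
    have hφ := isGlue_glueMap a b hab hUV h₁ h₂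
    by_cases hp : p ∈ U
    · exact (hφ.comp_eq_of_mem_left hab hUV h₁.hasPivots h₂.hasPivots hp _ _).symm
    · exact (hφ.symm.comp_eq_of_mem_left hab.symm (union_comm U V ▸ hUV) h₂.hasPivots
        h₁.hasPivots (compl_subset_iff_union.2 hUV hp) _ _).symm

end Glue

theorem restrF_eq_of_map_eq {A : Set P} {L : P ⥤ C} {F : ↥A ⥤ C}
    (hobj : ∀ x : A, F.obj x = L.obj x)
    (hmap : ∀ ⦃p q : P⦄ (hp : p ∈ A) (hq : q ∈ A) (h : p ≤ q),
      L.map (homOfLE h) = (LocalFunctor.ofFunctor F hobj).map hp hq h) :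
    restrF L A = F :=
  CategoryTheory.Functor.ext (fun x => (hobj x).symm) fun x y f => hmap x.2 y.2 (leOfHom f)

theorem eq_of_restrF_eq {U V : Set P} {L₁ L₂ : P ⥤ C} (hUV : U ∪ V = univ)
    (hpUV : HasPivots U V) (hpVU : HasPivots V U)
    (hU : restrF L₁ U = restrF L₂ U) (hV : restrF L₁ V = restrF L₂ V) : L₁ = L₂ := by
  have hobj : ∀ p, L₁.obj p = L₂.obj p := fun p =>
    (show p ∈ U ∪ V from hUV ▸ mem_univ p).elim (fun hp => Functor.congr_obj hU ⟨p, hp⟩)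
      (fun hp => Functor.congr_obj hV ⟨p, hp⟩)
  let Agrees : ∀ {p q : P}, (p ⟶ q) → Prop := fun {p q} f =>
    L₁.map f = eqToHom (hobj p) ≫ L₂.map f ≫ eqToHom (hobj q).symm
  have hcomp : ∀ {p q r : P} (f : p ⟶ q) (g : q ⟶ r), Agrees f → Agrees g →
      Agrees (f ≫ g) := by
    intro p q r f g hf hg
    simp only [Agrees, Functor.map_comp, hf, hg, Category.assoc, eqToHom_trans_assoc,
      eqToHom_refl, Category.id_comp]
  have hpiece : ∀ {S : Set P}, restrF L₁ S = restrF L₂ S →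
      ∀ {p q : P} (hp : p ∈ S) (hq : q ∈ S) (f : p ⟶ q), Agrees f :=
    fun hS p q hp hq f =>
      Functor.congr_hom hS (X := ⟨p, hp⟩) (Y := ⟨q, hq⟩) (homOfLE (leOfHom f))
  refine CategoryTheory.Functor.ext hobj fun p q f => ?_
  have hp : p ∈ U ∪ V := hUV ▸ mem_univ p
  have hq : q ∈ U ∪ V := hUV ▸ mem_univ q
  rcases hp with hp | hp <;> rcases hq with hq | hq
  · exact hpiece hU hp hq f
  · obtain ⟨w, hw⟩ := hpUV p hp q hq (leOfHom f)
    exact hcomp (homOfLE hw.2.1) (homOfLE hw.2.2) (hpiece hU hp hw.1.1 _)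
      (hpiece hV hw.1.2 hq _)
  · obtain ⟨w, hw⟩ := hpVU p hp q hq (leOfHom f)
    exact hcomp (homOfLE hw.2.1) (homOfLE hw.2.2) (hpiece hV hp hw.1.1 _)
      (hpiece hU hw.1.2 hq _)
  · exact hpiece hV hp hq f

end Gluing

/-- Gluing functors along two subposets covering a poset, with connected coamalgamation
intervals. -/
theorem glue_functors (C : Type*) [CategoryTheory.Category C] (P : Type) [PartialOrder P]
    (U V : Set P) (hUV : U ∪ V = Set.univ)
    (h₁ : ∀ u ∈ U, ∀ v ∈ V, u ≤ v → ConnectedSubposet (U ∩ V ∩ Set.Icc u v))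
    (h₂ : ∀ v ∈ V, ∀ u ∈ U, v ≤ u → ConnectedSubposet (U ∩ V ∩ Set.Icc v u))
    (M : ↥U ⥤ C) (N : ↥V ⥤ C)
    (hMN : restrSubF Set.inter_subset_left M = restrSubF Set.inter_subset_right N) :
    ∃! L : P ⥤ C, restrF L U = M ∧ restrF L V = N := by
  classical
  let X : P → C := fun p =>
    if hp : p ∈ U then M.obj ⟨p, hp⟩ else N.obj ⟨p, compl_subset_iff_union.2 hUV hp⟩
  have hXU : ∀ x : U, M.obj x = X x := fun x => by simp only [X, dif_pos x.2]
  have hXV : ∀ x : V, N.obj x = X x := fun x => by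
    by_cases hx : x.1 ∈ U
    · have hobj : M.obj ⟨x, hx⟩ = N.obj x := Functor.congr_obj hMN ⟨x, hx, x.2⟩
      simp only [X, dif_pos hx, hobj]
    · simp only [X, dif_neg hx]
  have h₁' : HasConnectedPivots U V := h₁
  have hab := LocalFunctor.agree_ofFunctor hXU hXV hMN
  have h₂' : HasConnectedPivots V U := by
    simpa only [HasConnectedPivots, inter_comm V U] using h₂
  have hφ := isGlue_glueMap _ _ hab hUV h₁' h₂'
  have hLU : restrF (glue _ _ hab hUV h₁' h₂') U = M := restrF_eq_of_map_eq hXU hφ.eq_left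
  have hLV : restrF (glue _ _ hab hUV h₁' h₂') V = N := restrF_eq_of_map_eq hXV hφ.eq_right
  refine ⟨glue _ _ hab hUV h₁' h₂', ⟨hLU, hLV⟩, fun L hL => ?_⟩
  exact eq_of_restrF_eq hUV h₁'.hasPivots h₂'.hasPivots (hL.1.trans hLU.symm)
    (hL.2.trans hLV.symm)
end

section
/- Let 𝒫 be a poset and let U, V ⊆ 𝒫 be such that U ∪ V = 𝒫. Let L : 𝒫 → vec be a persistence module such that L|_V is indecomposable, and such that L|_U admits a decomposition ⊕_{i∈I} X_i into indecomposables with X_i|_{U∩V} ≠ 0 for every i ∈ I. Then L is indecomposable. -/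
namespace PersMod

section Decomposition

variable {k : Type} [Field k] {P : Type} [PartialOrder P]

/-- The map between direct sums induced by a family of linear maps. -/
noncomputable def dsMap {ι : Type} {A B : ι → Type}
    [∀ i, AddCommGroup (A i)] [∀ i, Module k (A i)]
    [∀ i, AddCommGroup (B i)] [∀ i, Module k (B i)]
    (f : ∀ i, A i →ₗ[k] B i) : (DirectSum ι A) →ₗ[k] DirectSum ι B :=
  letI := Classical.decEq ι
  DirectSum.toModule k ι _ (fun i => (DirectSum.lof k ι B i).comp (f i))

/-- `M` is (isomorphic to) the direct sum of the family of persistence modules `Ms`. -/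
def IsDecomposition {ι : Type} (M : PersMod k P) (Ms : ι → PersMod k P) : Prop :=
  ∃ e : ∀ x : P, M.carrier x ≃ₗ[k] DirectSum ι (fun i => (Ms i).carrier x),
    ∀ (x y : P) (h : x ≤ y) (v : M.carrier x),
      e y (M.map h v) = dsMap (fun i => (Ms i).map h) (e x v)

end Decomposition

section Restriction

variable {k : Type} [Field k] {P : Type} [PartialOrder P]

/-- Restriction of a persistence module to a full subposet. -/
def restrictMod (M : PersMod k P) (S : Set P) : PersMod k ↥S where
  carrier x := M.carrier x.1
  map {x y} h := M.map (Subtype.coe_le_coe.mpr h)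
  map_id x := M.map_id x.1
  map_comp h₁ h₂ := M.map_comp _ _

end Restriction

end PersMod

open PersMod

/-!
Write `L ≅ A ⊕ B`. As `L|_V` is indecomposable, one summand, say `A`, vanishes on `V`, and it
remains to show that `A` vanishes on `U`. By Fitting's lemma `End(X_i)` is local, and an
endomorphism of `X_i` factoring through `A|_U` vanishes on `U ∩ V`, where `X_i ≠ 0`; so it is not
invertible, and `1` minus it is. Hence every composite `A|_U → X_i → A|_U` lies in the Jacobson
radical of `End(A|_U)`, and so does every finite sum of them. But on a given vector `v` of `A`,
the sum over the finitely many `i` where `v` has a nonzero component in `⊕ X_i` acts as the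
identity, which forces `v = 0`.
-/

namespace PersMod

variable {k : Type} [Field k] {Q : Type} [PartialOrder Q]

namespace Hom

variable {M N O : PersMod k Q}

theorem app_map (f : Hom M N) {x y : Q} (h : x ≤ y) (v : M.carrier x) :
    f.app y (M.map h v) = N.map h (f.app x v) :=
  LinearMap.congr_fun (f.natural h) v

protected def id (M : PersMod k Q) : Hom M M where
  app _ := LinearMap.id
  natural _ := by rw [LinearMap.id_comp, LinearMap.comp_id]

def comp (g : Hom N O) (f : Hom M N) : Hom M O where
  app x := g.app x ∘ₗ f.app x
  natural h := by
    rw [LinearMap.comp_assoc, f.natural, ← LinearMap.comp_assoc, g.natural, LinearMap.comp_assoc]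

instance : Add (Hom M N) where
  add f g := ⟨fun x => f.app x + g.app x, fun h => by
    rw [LinearMap.add_comp, LinearMap.comp_add, f.natural, g.natural]⟩

instance : Sub (Hom M N) where
  sub f g := ⟨fun x => f.app x - g.app x, fun h => by
    rw [LinearMap.sub_comp, LinearMap.comp_sub, f.natural, g.natural]⟩

@[simp] theorem id_app (M : PersMod k Q) (x : Q) : (Hom.id M).app x = LinearMap.id := rfl

@[simp] theorem comp_app (g : Hom N O) (f : Hom M N) (x : Q) :
    (g.comp f).app x = g.app x ∘ₗ f.app x := rfl

@[simp] theorem add_app (f g : Hom M N) (x : Q) : (f + g).app x = f.app x + g.app x := rfl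

@[simp] theorem sub_app (f g : Hom M N) (x : Q) : (f - g).app x = f.app x - g.app x := rfl

def restrict (f : Hom M N) (S : Set Q) : Hom (restrictMod M S) (restrictMod N S) where
  app x := f.app x
  natural _ := f.natural _

theorem exists_inverse_of_bijective (f : Hom M N) (hf : ∀ x, Function.Bijective (f.app x)) :
    ∃ g : Hom N M, (∀ x, g.app x ∘ₗ f.app x = LinearMap.id) ∧
      (∀ x, f.app x ∘ₗ g.app x = LinearMap.id) := by
  let e x : M.carrier x ≃ₗ[k] N.carrier x := LinearEquiv.ofBijective (f.app x) (hf x)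
  refine ⟨⟨fun x => (e x).symm.toLinearMap, fun {x y} h => LinearMap.ext fun w => ?_⟩,
    fun x => LinearMap.ext (e x).symm_apply_apply, fun x => LinearMap.ext (e x).apply_symm_apply⟩
  obtain ⟨v, rfl⟩ := (e x).surjective w
  simp only [LinearMap.comp_apply, LinearEquiv.coe_coe, LinearEquiv.symm_apply_apply]
  rw [LinearEquiv.symm_apply_eq]
  exact (f.app_map h v).symm

end Hom

theorem Isom.restrict {M A B : PersMod k Q} (hM : Isom M (dsum A B)) (S : Set Q) :
    Isom (restrictMod M S) (dsum (restrictMod A S) (restrictMod B S)) :=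
  let ⟨f, g, hgf, hfg⟩ := hM
  ⟨f.restrict S, g.restrict S, fun x => hgf x, fun x => hfg x⟩

def IsRetract (C M : PersMod k Q) : Prop :=
  ∃ (j : Hom C M) (p : Hom M C), ∀ x c, p.app x (j.app x c) = c

theorem IsRetract.restrict {C M : PersMod k Q} (hC : IsRetract C M) (S : Set Q) :
    IsRetract (restrictMod C S) (restrictMod M S) :=
  let ⟨j, p, hpj⟩ := hC
  ⟨j.restrict S, p.restrict S, fun x => hpj x⟩

def inlHom (A B : PersMod k Q) : Hom A (dsum A B) where
  app _ := LinearMap.inl k _ _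
  natural h := LinearMap.ext fun _ => Prod.ext rfl (map_zero (B.map h)).symm

def inrHom (A B : PersMod k Q) : Hom B (dsum A B) where
  app _ := LinearMap.inr k _ _
  natural h := LinearMap.ext fun _ => Prod.ext (map_zero (A.map h)).symm rfl

def fstHom (A B : PersMod k Q) : Hom (dsum A B) A where
  app _ := LinearMap.fst k _ _
  natural _ := rfl

def sndHom (A B : PersMod k Q) : Hom (dsum A B) B where
  app _ := LinearMap.snd k _ _
  natural _ := rfl

theorem Isom.isRetract_left {M A B : PersMod k Q} (hM : Isom M (dsum A B)) : IsRetract A M :=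
  let ⟨f, g, _, hfg⟩ := hM
  ⟨g.comp (inlHom A B), (fstHom A B).comp f, fun x c => by
    exact congrArg Prod.fst (LinearMap.congr_fun (hfg x) (c, 0))⟩

theorem Isom.isRetract_right {M A B : PersMod k Q} (hM : Isom M (dsum A B)) : IsRetract B M :=
  let ⟨f, g, _, hfg⟩ := hM
  ⟨g.comp (inrHom A B), (sndHom A B).comp f, fun x c => by
    exact congrArg Prod.snd (LinearMap.congr_fun (hfg x) (0, c))⟩

def subMod (X : PersMod k Q) (W : ∀ x, Submodule k (X.carrier x))
    (hW : ∀ {x y : Q} (h : x ≤ y), ∀ v ∈ W x, X.map h v ∈ W y) : PersMod k Q where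
  carrier x := W x
  map h := (X.map h).restrict (hW h)
  map_id x := LinearMap.ext fun v => Subtype.ext (by simp [X.map_id])
  map_comp h₁ h₂ := LinearMap.ext fun v => Subtype.ext (by simp [X.map_comp h₁ h₂])

section Fitting

variable {X : PersMod k Q}

theorem Indecomposable.eq_bot_or_eq_bot (hX : X.Indecomposable)
    {K I : ∀ x, Submodule k (X.carrier x)}
    (hK : ∀ {x y : Q} (h : x ≤ y), ∀ v ∈ K x, X.map h v ∈ K y)
    (hI : ∀ {x y : Q} (h : x ≤ y), ∀ v ∈ I x, X.map h v ∈ I y)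
    (hKI : ∀ x, IsCompl (K x) (I x)) :
    (∀ x, K x = ⊥) ∨ (∀ x, I x = ⊥) := by
  let add : Hom (dsum (subMod X K hK) (subMod X I hI)) X :=
    { app := fun x => (K x).subtype.coprod (I x).subtype
      natural := fun h => LinearMap.ext fun v => (map_add (X.map h) _ _).symm }
  obtain ⟨g, hga, hag⟩ := add.exists_inverse_of_bijective fun x =>
    (Submodule.prodEquivOfIsCompl _ _ (hKI x)).bijective
  refine (hX.2 _ _ ⟨g, add, hag, hga⟩).imp (fun hz x => ?_) (fun hz x => ?_)
  · have : Subsingleton (K x) := hz x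
    exact Submodule.eq_bot_of_subsingleton
  · have : Subsingleton (I x) := hz x
    exact Submodule.eq_bot_of_subsingleton

theorem Hom.pow_app_map (a : Hom X X) {x y : Q} (h : x ≤ y) (n : ℕ) (v : X.carrier x) :
    (a.app y ^ n) (X.map h v) = X.map h ((a.app x ^ n) v) := by
  induction n with
  | zero => rfl
  | succ n ih => rw [pow_succ', pow_succ', Module.End.mul_apply, ih, a.app_map,
      Module.End.mul_apply]

/-- Fitting's lemma: `⨆ ker aⁿ ⊕ ⨅ range aⁿ` is a decomposition of `X`, so one summand
vanishes. -/
theorem Indecomposable.bijective_or_bijective_id_sub (hX : X.Indecomposable) (a : Hom X X) :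
    (∀ x, Function.Bijective (a.app x)) ∨
      (∀ x, Function.Bijective ((Hom.id X - a).app x)) := by
  have hK : ∀ {x y : Q} (h : x ≤ y), ∀ v ∈ ⨆ n, LinearMap.ker (a.app x ^ n),
      X.map h v ∈ ⨆ n, LinearMap.ker (a.app y ^ n) := by
    intro x y h v hv
    suffices hle : ⨆ n, LinearMap.ker (a.app x ^ n) ≤
        (⨆ n, LinearMap.ker (a.app y ^ n)).comap (X.map h) from hle hv
    refine iSup_le fun n w hw => ?_
    refine Submodule.mem_iSup_of_mem n ?_
    rw [LinearMap.mem_ker] at hw ⊢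
    rw [a.pow_app_map, hw, map_zero]
  have hI : ∀ {x y : Q} (h : x ≤ y), ∀ v ∈ ⨅ n, LinearMap.range (a.app x ^ n),
      X.map h v ∈ ⨅ n, LinearMap.range (a.app y ^ n) := by
    intro x y h v hv
    simp only [Submodule.mem_iInf, LinearMap.mem_range] at hv ⊢
    intro n
    obtain ⟨w, rfl⟩ := hv n
    exact ⟨X.map h w, a.pow_app_map h n w⟩
  refine (hX.eq_bot_or_eq_bot hK hI fun x =>
    LinearMap.isCompl_iSup_ker_pow_iInf_range_pow _).imp (fun hK x => ?_) (fun hI x => ?_)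
  · have hinj : Function.Injective (a.app x) := by
      rw [← LinearMap.ker_eq_bot, eq_bot_iff, ← hK x, ← pow_one (a.app x)]
      exact le_iSup (fun n => LinearMap.ker (a.app x ^ n)) 1
    exact ⟨hinj, LinearMap.injective_iff_surjective.mp hinj⟩
  · obtain ⟨n, hn⟩ := Filter.eventually_atTop.mp (a.app x).eventually_iInf_range_pow_eq
    have hnil : IsNilpotent (a.app x) :=
      ⟨n, LinearMap.range_eq_bot.mp ((hn n le_rfl).symm.trans (hI x))⟩
    exact (Module.End.isUnit_iff _).mp hnil.isUnit_one_sub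

theorem Indecomposable.exists_leftInverse_id_sub (hX : X.Indecomposable) (a : Hom X X) {w : Q}
    (hw : ¬ Subsingleton (X.carrier w)) (ha : a.app w = 0) :
    ∃ s : Hom X X, ∀ x v, s.app x (v - a.app x v) = v := by
  have hbij := (hX.bijective_or_bijective_id_sub a).resolve_left fun h => hw <| by
    have hinj := (h w).1
    rw [ha] at hinj
    exact ⟨fun u v => hinj rfl⟩
  obtain ⟨s, hs, -⟩ := Hom.exists_inverse_of_bijective _ hbij
  exact ⟨s, fun x v => LinearMap.congr_fun (hs x) v⟩

end Fitting

/-- `hloc` says that each `q i ∘ p i` lies in the Jacobson radical of `End C`; the conclusion is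
that so does every finite sum of them. -/
theorem exists_leftInverse_id_sub_sum {C : PersMod k Q} {ι : Type} {X : ι → PersMod k Q}
    (q : ∀ i, Hom (X i) C) (p : ∀ i, Hom C (X i))
    (hloc : ∀ i (t : Hom C C), ∃ s : Hom (X i) (X i),
      ∀ x v, s.app x (v - (p i).app x (t.app x ((q i).app x v))) = v)
    (S : Finset ι) :
    ∃ h : Hom C C, ∀ x v, h.app x (v - ∑ i ∈ S, (q i).app x ((p i).app x v)) = v := by
  classical
  induction S using Finset.induction_on with
  | empty => exact ⟨Hom.id C, fun x v => by simp⟩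
  | insert j S hjS ih =>
    obtain ⟨h, hh⟩ := ih
    obtain ⟨s, hs⟩ := hloc j h
    refine ⟨h + h.comp ((q j).comp (s.comp ((p j).comp h))), fun x v => ?_⟩
    have hstep : h.app x (v - ∑ i ∈ insert j S, (q i).app x ((p i).app x v)) =
        v - h.app x ((q j).app x ((p j).app x v)) := by
      rw [Finset.sum_insert hjS, sub_add_eq_sub_sub_swap, map_sub, hh]
    have hs' : s.app x ((p j).app x (v - h.app x ((q j).app x ((p j).app x v)))) =
        (p j).app x v := by
      rw [map_sub, hs]
    simp only [Hom.add_app, Hom.comp_app, LinearMap.add_apply, LinearMap.comp_apply, hstep, hs',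
      sub_add_cancel]

theorem dsMap_eq_lmap {ι : Type} {A B : ι → Type}
    [∀ i, AddCommGroup (A i)] [∀ i, Module k (A i)]
    [∀ i, AddCommGroup (B i)] [∀ i, Module k (B i)]
    (f : ∀ i, A i →ₗ[k] B i) : dsMap f = DirectSum.lmap f := by
  classical
  refine DirectSum.linearMap_ext k fun i => LinearMap.ext fun v => ?_
  simp only [dsMap, LinearMap.comp_apply, DirectSum.lmap_lof]
  convert DirectSum.toModule_lof k i v
  rfl

theorem IsDecomposition.exists_inj_proj {ι : Type} {M : PersMod k Q} {Xs : ι → PersMod k Q}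
    (hdec : IsDecomposition M Xs) :
    ∃ (inj : ∀ i, Hom (Xs i) M) (proj : ∀ i, Hom M (Xs i)),
      ∀ x v, ∃ S : Finset ι, ∑ i ∈ S, (inj i).app x ((proj i).app x v) = v := by
  classical
  obtain ⟨e, he⟩ := hdec
  simp only [dsMap_eq_lmap] at he
  refine ⟨fun i =>
      ⟨fun x => (e x).symm.toLinearMap ∘ₗ DirectSum.lof k ι (fun i => (Xs i).carrier x) i,
        fun {x y} h => LinearMap.ext fun v => ?_⟩,
    fun i =>
      ⟨fun x => DirectSum.component k ι (fun i => (Xs i).carrier x) i ∘ₗ (e x).toLinearMap,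
        fun {x y} h => LinearMap.ext fun v => ?_⟩,
    fun x v => ⟨DFinsupp.support (e x v), ?_⟩⟩
  · simp only [LinearMap.comp_apply, LinearEquiv.coe_coe]
    rw [LinearEquiv.symm_apply_eq, he, LinearEquiv.apply_symm_apply, DirectSum.lmap_lof]
  · simp only [LinearMap.comp_apply, LinearEquiv.coe_coe, he]
    rfl
  · simp only [LinearMap.comp_apply, LinearEquiv.coe_coe, ← map_sum, LinearEquiv.symm_apply_eq]
    exact DirectSum.sum_support_of (e x v)

theorem IsRetract.isZeroMod {U V : Set Q} (hUV : U ∪ V = Set.univ) {L C : PersMod k Q}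
    (hC : IsRetract C L) (hCV : ∀ x ∈ V, Subsingleton (C.carrier x))
    {ι : Type} {Xs : ι → PersMod k U} (hdec : IsDecomposition (restrictMod L U) Xs)
    (hind : ∀ i, (Xs i).Indecomposable)
    (hnz : ∀ i, ¬ IsZeroMod (restrictMod (Xs i) {x : U | (x : Q) ∈ V})) :
    IsZeroMod C := by
  intro x
  by_cases hxV : x ∈ V
  · exact hCV x hxV
  have hxU : x ∈ U := (hUV ▸ Set.mem_univ x : x ∈ U ∪ V).resolve_right hxV
  obtain ⟨j, p, hpj⟩ := hC.restrict U
  obtain ⟨inj, proj, hsum⟩ := hdec.exists_inj_proj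
  have hloc : ∀ i (t : Hom (restrictMod C U) (restrictMod C U)), ∃ s : Hom (Xs i) (Xs i),
      ∀ y v, s.app y (v - ((proj i).comp j).app y (t.app y ((p.comp (inj i)).app y v))) = v := by
    intro i t
    obtain ⟨⟨w, hwV⟩, hw⟩ := not_forall.mp (hnz i)
    have : Subsingleton ((restrictMod C U).carrier w) := hCV w hwV
    refine (hind i).exists_leftInverse_id_sub (((proj i).comp j).comp (t.comp (p.comp (inj i))))
      hw (LinearMap.ext fun v => ?_)
    simp only [Hom.comp_app, LinearMap.comp_apply, LinearMap.zero_apply]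
    rw [Subsingleton.elim ((p.app w) ((inj i).app w v)) 0, map_zero, map_zero, map_zero]
  set x' : U := ⟨x, hxU⟩
  suffices hzero : ∀ v : (restrictMod C U).carrier x', v = 0 from
    ⟨fun v₁ v₂ => (hzero v₁).trans (hzero v₂).symm⟩
  intro v
  obtain ⟨S, hS⟩ := hsum x' (j.app x' v)
  obtain ⟨h, hh⟩ := exists_leftInverse_id_sub_sum _ _ hloc S
  have hv : ∑ i ∈ S, (p.comp (inj i)).app x' (((proj i).comp j).app x' v) = v := by
    simp only [Hom.comp_app, LinearMap.comp_apply, ← map_sum, hS]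
    exact hpj x' v
  rw [← hh x' v, hv, sub_self, map_zero]

end PersMod

/-- Gluing indecomposability: if `L|_V` is indecomposable and every indecomposable summand
of `L|_U` is nonzero on `U ∩ V`, then `L` is indecomposable. -/
theorem gluing_indecomposable (k : Type) [Field k] (P : Type) [PartialOrder P]
    (U V : Set P) (hUV : U ∪ V = Set.univ)
    (L : PersMod k P)
    (hLV : (restrictMod L V).Indecomposable)
    (ι : Type) (Xs : ι → PersMod k ↥U)
    (hdec : IsDecomposition (restrictMod L U) Xs)
    (hind : ∀ i, (Xs i).Indecomposable)
    (hnz : ∀ i, ¬ IsZeroMod (restrictMod (Xs i) {x : ↥U | (x : P) ∈ V})) :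
    L.Indecomposable := by
  refine ⟨fun hL => hLV.1 fun x => hL x, fun A B hAB => ?_⟩
  rcases hLV.2 _ _ (hAB.restrict V) with hA | hB
  · exact Or.inl (hAB.isRetract_left.isZeroMod hUV (fun x hx => hA ⟨x, hx⟩) hdec hind hnz)
  · exact Or.inr (hAB.isRetract_right.isZeroMod hUV (fun x hx => hB ⟨x, hx⟩) hdec hind hnz)
end
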